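/- Let λ* and λ be two feasible leftover queue-length vectors (sorted in descending order) over the same state. If λ* is lexicographically minimal among all feasible vectors and λ' = λ* − I(l, s) is feasible for some positions l < s with λ*_s < λ*_l − 1 (where I(l,s) decrements position l and increments position s), then λ' <_lex λ*, a contradiction; hence no strictly balancing interchange on λ* can be feasible, i.e., the lexicographically minimal feasible vector minimizes the imbalance index among all feasible vectors. -/
import Mathlib

private lemma abs_pair_aux (a u v : ℤ) (h : v + 2 ≤ u) :
    |u - 1 - a| + |v + 1 - a| ≤ |u - a| + |v - a| := by
  rcases abs_cases (u - 1 - a) with ⟨e1, _⟩ | ⟨e1, _⟩ <;>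
  rcases abs_cases (v + 1 - a) with ⟨e2, _⟩ | ⟨e2, _⟩ <;>
  rcases abs_cases (u - a) with ⟨e3, _⟩ | ⟨e3, _⟩ <;>
  rcases abs_cases (v - a) with ⟨e4, _⟩ | ⟨e4, _⟩ <;>
  omega

noncomputable def sortDesc {n : ℕ} (x : Fin n → ℤ) : Fin n → ℤ :=
  fun i => x (Tuple.sort x (Fin.rev i))

noncomputable def kappa {n : ℕ} (x : Fin n → ℤ) : ℤ :=
  ∑ i : Fin n, ∑ j : Fin n, if i < j then sortDesc x i - sortDesc x j else 0

/-- Strict lexicographic ordering on vectors. -/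
def lexLt {n : ℕ} (a b : Fin n → ℤ) : Prop :=
  ∃ k : Fin n, (∀ i, i < k → a i = b i) ∧ a k < b k

private lemma sortDesc_antitone {n : ℕ} (x : Fin n → ℤ) : Antitone (sortDesc x) := by
  intro i j hij
  exact Tuple.monotone_sort x (Fin.rev_le_rev.mpr hij)

private lemma sortDesc_eq_comp {n : ℕ} (x : Fin n → ℤ) :
    ∀ i, sortDesc x i = x ((Fin.revPerm.trans (Tuple.sort x)) i) := fun _ => rfl

private lemma strictMono_fin_le {m n : ℕ} (g : Fin m → Fin n) (hg : StrictMono g) :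
    ∀ j : Fin m, (j : ℕ) ≤ (g j : ℕ) := by
  have H : ∀ v : ℕ, ∀ h : v < m, v ≤ (g ⟨v, h⟩ : ℕ) := by
    intro v
    induction v with
    | zero => intro h; exact Nat.zero_le _
    | succ v ih =>
      intro h
      have h' : v < m := Nat.lt_of_succ_lt h
      have h1 := hg (show (⟨v, h'⟩ : Fin m) < ⟨v + 1, h⟩ by rw [Fin.lt_def]; simp)
      have h2 := ih h'
      rw [Fin.lt_def] at h1
      omega
  intro j
  have := H j.val j.isLt
  simpa using this

private lemma sum_le_prefix {n : ℕ} (f : Fin n → ℤ) (hf : Antitone f) (S : Finset (Fin n))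
    (k : Fin n) (hcard : S.card = (k : ℕ) + 1) :
    ∑ i ∈ S, f i ≤ ∑ i ∈ Finset.Iic k, f i := by
  set m := (k : ℕ) + 1 with hm
  have hmn : m ≤ n := k.isLt
  let emb := S.orderEmbOfFin hcard
  have hSim : Finset.image (fun j => emb j) Finset.univ = S := by
    apply Finset.coe_injective
    simp only [Finset.coe_image, Finset.coe_univ, Set.image_univ]
    exact S.range_orderEmbOfFin hcard
  have hIic : Finset.image (fun j : Fin m => Fin.castLE hmn j) Finset.univ = Finset.Iic k := by
    ext i
    simp only [Finset.mem_image, Finset.mem_univ, true_and, Finset.mem_Iic]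
    constructor
    · rintro ⟨j, rfl⟩
      simp [Fin.le_def, Fin.castLE]
      omega
    · intro hi
      refine ⟨⟨i.val, ?_⟩, ?_⟩
      · have := Fin.le_def.mp hi; omega
      · ext; simp [Fin.castLE]
  rw [← hSim, ← hIic,
    Finset.sum_image (fun a _ b _ h => emb.injective h),
    Finset.sum_image (fun a _ b _ h => Fin.castLE_injective hmn h)]
  apply Finset.sum_le_sum
  intro j _
  apply hf
  rw [Fin.le_def]
  exact strictMono_fin_le emb emb.strictMono j

private lemma sum_diff_pair {n : ℕ} (lam lam' : Fin n → ℤ) (l s : Fin n) (hne : l ≠ s)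
    (h'l : lam' l = lam l - 1) (h's : lam' s = lam s + 1)
    (h'o : ∀ i, i ≠ l → i ≠ s → lam' i = lam i) (T : Finset (Fin n)) :
    ∑ i ∈ T, lam' i =
      ∑ i ∈ T, lam i + (if s ∈ T then 1 else 0) - (if l ∈ T then 1 else 0) := by
  have hpt : ∀ i, lam' i - lam i =
      (if i = s then (1 : ℤ) else 0) - (if i = l then 1 else 0) := by
    intro i
    split_ifs with hs hl hl
    · exact absurd (hl.symm.trans hs) hne
    · subst hs; rw [h's]; ring
    · subst hl; rw [h'l]; ring
    · rw [h'o i hl hs]; ring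
  have : ∑ i ∈ T, (lam' i - lam i) =
      (if s ∈ T then (1:ℤ) else 0) - (if l ∈ T then 1 else 0) := by
    rw [show (fun i => lam' i - lam i) = fun i =>
      ((if i = s then (1 : ℤ) else 0) - (if i = l then 1 else 0)) from funext hpt]
    rw [Finset.sum_sub_distrib, Finset.sum_ite_eq' T s (fun _ => (1:ℤ)),
      Finset.sum_ite_eq' T l (fun _ => (1:ℤ))]
  rw [Finset.sum_sub_distrib] at this
  linarith

private lemma sum_interchange_le {n : ℕ} (lam lam' : Fin n → ℤ) (hsort : Antitone lam)
    (l s : Fin n) (hls : l < s) (h2 : lam s ≤ lam l - 2)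
    (h'l : lam' l = lam l - 1) (h's : lam' s = lam s + 1)
    (h'o : ∀ i, i ≠ l → i ≠ s → lam' i = lam i)
    (S : Finset (Fin n)) (k : Fin n) (hcard : S.card = (k : ℕ) + 1) :
    ∑ i ∈ S, lam' i ≤ ∑ i ∈ Finset.Iic k, lam i := by
  have hne : l ≠ s := ne_of_lt hls
  have hdiff := sum_diff_pair lam lam' l s hne h'l h's h'o S
  have hpre := sum_le_prefix lam hsort S k hcard
  by_cases hcase : s ∈ S ∧ l ∉ S
  · obtain ⟨hsS, hlS⟩ := hcase
    set S' : Finset (Fin n) := insert l (S.erase s) with hS'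
    have hlnotmem : l ∉ S.erase s := fun h => hlS (Finset.mem_of_mem_erase h)
    have hcard' : S'.card = (k : ℕ) + 1 := by
      rw [hS', Finset.card_insert_of_notMem hlnotmem, Finset.card_erase_of_mem hsS, hcard]
      have : 1 ≤ (k : ℕ) + 1 := Nat.le_add_left 1 _
      omega
    have hsum' : ∑ i ∈ S', lam i = lam l + (∑ i ∈ S, lam i - lam s) := by
      rw [hS', Finset.sum_insert hlnotmem, Finset.sum_erase_eq_sub hsS]
    have hpre' := sum_le_prefix lam hsort S' k hcard'
    rw [if_pos hsS, if_neg hlS] at hdiff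
    linarith
  · rcases Decidable.not_and_iff_or_not.mp hcase with hsS | hlS
    · rw [if_neg (by simpa using hsS)] at hdiff
      split_ifs at hdiff <;> linarith
    · rw [if_pos (not_not.mp hlS)] at hdiff
      split_ifs at hdiff <;> linarith

private lemma two_kappa {n : ℕ} (x : Fin n → ℤ) :
    2 * kappa x = ∑ i : Fin n, ∑ j : Fin n, |x i - x j| := by
  have hanti := sortDesc_antitone x
  have key : ∀ i j : Fin n, |sortDesc x i - sortDesc x j| =
      (if i < j then sortDesc x i - sortDesc x j else 0)
        + (if j < i then sortDesc x j - sortDesc x i else 0) := by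
    intro i j
    rcases lt_trichotomy i j with h | h | h
    · rw [if_pos h, if_neg (asymm h), abs_of_nonneg (sub_nonneg.mpr (hanti h.le)), add_zero]
    · subst h; simp
    · rw [if_neg (asymm h), if_pos h, abs_of_nonpos (sub_nonpos.mpr (hanti h.le)), zero_add]
      ring
  have h1 : ∑ i : Fin n, ∑ j : Fin n, |sortDesc x i - sortDesc x j| = 2 * kappa x := by
    calc ∑ i : Fin n, ∑ j : Fin n, |sortDesc x i - sortDesc x j|
        = ∑ i : Fin n, ∑ j : Fin n, ((if i < j then sortDesc x i - sortDesc x j else 0)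
            + (if j < i then sortDesc x j - sortDesc x i else 0)) := by
          simp_rw [key]
      _ = (∑ i : Fin n, ∑ j : Fin n, if i < j then sortDesc x i - sortDesc x j else 0)
          + ∑ i : Fin n, ∑ j : Fin n, (if j < i then sortDesc x j - sortDesc x i else 0) := by
          rw [← Finset.sum_add_distrib]
          exact Finset.sum_congr rfl (fun i _ => Finset.sum_add_distrib)
      _ = kappa x + kappa x := by
          rw [Finset.sum_comm (f := fun i j => if j < i then sortDesc x j - sortDesc x i else 0)]
          rfl
      _ = 2 * kappa x := by ring
  rw [← h1]
  let e : Equiv.Perm (Fin n) := Fin.revPerm.trans (Tuple.sort x)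
  have hμ : ∀ i, sortDesc x i = x (e i) := fun _ => rfl
  calc ∑ i : Fin n, ∑ j : Fin n, |sortDesc x i - sortDesc x j|
      = ∑ i : Fin n, ∑ j : Fin n, |x (e i) - x (e j)| := by simp_rw [hμ]
    _ = ∑ i : Fin n, ∑ j : Fin n, |x (e i) - x j| :=
        Finset.sum_congr rfl (fun i _ => Equiv.sum_comp e (fun j => |x (e i) - x j|))
    _ = ∑ i : Fin n, ∑ j : Fin n, |x i - x j| :=
        Equiv.sum_comp e (fun i => ∑ j : Fin n, |x i - x j|)

/-- If a descending-sorted vector admits a strictly balancing interchange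
(λ*_s ≤ λ*_l - 2 with l < s), the re-sorted result is strictly
lexicographically smaller and has a strictly smaller imbalance index. -/
theorem stmt16 {L : ℕ} (lam : Fin (L + 1) → ℤ) (hnn : ∀ i, 0 ≤ lam i)
    (hsort : Antitone lam) (l s : Fin (L + 1)) (hls : l < s)
    (h2 : lam s ≤ lam l - 2)
    (lam' : Fin (L + 1) → ℤ)
    (hlam' : lam' = fun k => if k = l then lam l - 1
      else if k = s then lam s + 1 else lam k) :
    lexLt (sortDesc lam') lam ∧ kappa lam' < kappa lam := by
  classical
  have hne : l ≠ s := ne_of_lt hls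
  have h'l : lam' l = lam l - 1 := by rw [hlam']; simp
  have h's : lam' s = lam s + 1 := by rw [hlam']; simp [hne.symm]
  have h'o : ∀ i, i ≠ l → i ≠ s → lam' i = lam i := by
    intro i h1' h2'
    rw [hlam']
    simp [h1', h2']
  constructor
  · -- lexicographic part
    set μ := sortDesc lam' with hμdef
    let e : Equiv.Perm (Fin (L + 1)) := Fin.revPerm.trans (Tuple.sort lam')
    have hμe : ∀ i, μ i = lam' (e i) := fun _ => rfl
    -- sum of squares strictly decreases, so μ ≠ lam
    have hsq : ∑ i : Fin (L + 1), lam' i ^ 2 < ∑ i : Fin (L + 1), lam i ^ 2 := by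
      have hz : ∑ i : Fin (L + 1), (lam' i ^ 2 - lam i ^ 2)
          = ∑ i ∈ ({l, s} : Finset (Fin (L + 1))), (lam' i ^ 2 - lam i ^ 2) := by
        refine (Finset.sum_subset (Finset.subset_univ _) ?_).symm
        intro i _ hi
        simp only [Finset.mem_insert, Finset.mem_singleton, not_or] at hi
        rw [h'o i hi.1 hi.2, sub_self]
      rw [Finset.sum_pair hne, h'l, h's] at hz
      have hz2 : ∑ i : Fin (L + 1), (lam' i ^ 2 - lam i ^ 2) ≤ -2 := by
        rw [hz]; nlinarith [h2]
      rw [Finset.sum_sub_distrib] at hz2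
      linarith
    have hμne : μ ≠ lam := by
      intro h
      have h1 : ∑ i : Fin (L + 1), μ i ^ 2 = ∑ i : Fin (L + 1), lam' i ^ 2 :=
        Equiv.sum_comp e (fun i => lam' i ^ 2)
      rw [h] at h1
      linarith
    obtain ⟨i0, hi0⟩ := Function.ne_iff.mp hμne
    set T : Finset (Fin (L + 1)) := Finset.univ.filter (fun i => μ i ≠ lam i) with hT
    have hTne : T.Nonempty := ⟨i0, by simp [hT, hi0]⟩
    set k := T.min' hTne with hk
    have hkT : μ k ≠ lam k := by
      have := T.min'_mem hTne
      simp only [hT, Finset.mem_filter] at this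
      exact this.2
    have hbelow : ∀ i, i < k → μ i = lam i := by
      intro i hik
      by_contra hcon
      have hiT : i ∈ T := by simp [hT, hcon]
      exact absurd hik (not_lt.mpr (T.min'_le i hiT))
    have hcard : ((Finset.Iic k).image e).card = (k : ℕ) + 1 := by
      rw [Finset.card_image_of_injective _ e.injective, Fin.card_Iic]
    have hsumle : ∑ i ∈ Finset.Iic k, μ i ≤ ∑ i ∈ Finset.Iic k, lam i := by
      calc ∑ i ∈ Finset.Iic k, μ i = ∑ i ∈ Finset.Iic k, lam' (e i) :=
            Finset.sum_congr rfl (fun i _ => hμe i)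
        _ = ∑ i ∈ (Finset.Iic k).image e, lam' i :=
            (Finset.sum_image (fun a _ b _ h => e.injective h)).symm
        _ ≤ ∑ i ∈ Finset.Iic k, lam i :=
            sum_interchange_le lam lam' hsort l s hls h2 h'l h's h'o _ k hcard
    have hIic : Finset.Iic k = insert k (Finset.Iio k) := (Finset.Iio_insert k).symm
    rw [hIic, Finset.sum_insert (by simp), Finset.sum_insert (by simp)] at hsumle
    have heq : ∑ i ∈ Finset.Iio k, μ i = ∑ i ∈ Finset.Iio k, lam i :=
      Finset.sum_congr rfl (fun i hi => hbelow i (Finset.mem_Iio.mp hi))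
    refine ⟨k, hbelow, lt_of_le_of_ne (by linarith) hkT⟩
  · -- kappa part
    set d : Fin (L + 1) → Fin (L + 1) → ℤ :=
      fun i j => |lam i - lam j| - |lam' i - lam' j| with hd
    have hd_symm : ∀ i j, d i j = d j i := by
      intro i j; simp only [hd]; rw [abs_sub_comm (lam i), abs_sub_comm (lam' i)]
    have hd_oo : ∀ i j, i ≠ l → i ≠ s → j ≠ l → j ≠ s → d i j = 0 := by
      intro i j hil his hjl hjs
      simp only [hd]
      rw [h'o i hil his, h'o j hjl hjs, sub_self]
    have hpair : ∀ j, j ≠ l → j ≠ s → 0 ≤ d l j + d s j := by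
      intro j hjl hjs
      have hap := abs_pair_aux (lam j) (lam l) (lam s) (by linarith)
      simp only [hd]
      rw [h'l, h's, h'o j hjl hjs]
      have e1 : lam l - 1 - lam j = lam l - 1 - lam j := rfl
      linarith [hap]
    have hd_ls : d l s = 2 := by
      simp only [hd]
      rw [h'l, h's, abs_of_nonneg (by linarith), abs_of_nonneg (by linarith)]
      ring
    have hd_sl : d s l = 2 := by rw [hd_symm s l, hd_ls]
    have hd_ll : d l l = 0 := by simp [hd]
    have hd_ss : d s s = 0 := by simp [hd]
    -- rows away from {l, s}
    have hrow : ∀ i : Fin (L + 1), i ≠ l → i ≠ s → 0 ≤ ∑ j : Fin (L + 1), d i j := by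
      intro i hil his
      have : ∑ j : Fin (L + 1), d i j = ∑ j ∈ ({l, s} : Finset (Fin (L + 1))), d i j := by
        refine (Finset.sum_subset (Finset.subset_univ _) ?_).symm
        intro j _ hj
        simp only [Finset.mem_insert, Finset.mem_singleton, not_or] at hj
        exact hd_oo i j hil his hj.1 hj.2
      rw [this, Finset.sum_pair hne, hd_symm i l, hd_symm i s]
      exact hpair i hil his
    -- total sum is at least 4
    have htotal : 0 < ∑ i : Fin (L + 1), ∑ j : Fin (L + 1), d i j := by
      have hsplit : ∑ i : Fin (L + 1), ∑ j : Fin (L + 1), d i j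
          = ∑ i ∈ Finset.univ \ ({l, s} : Finset (Fin (L + 1))), (∑ j : Fin (L + 1), d i j)
            + ∑ i ∈ ({l, s} : Finset (Fin (L + 1))), (∑ j : Fin (L + 1), d i j) :=
        (Finset.sum_sdiff (Finset.subset_univ _)).symm
      have hpart1 : 0 ≤ ∑ i ∈ Finset.univ \ ({l, s} : Finset (Fin (L + 1))),
          (∑ j : Fin (L + 1), d i j) := by
        apply Finset.sum_nonneg
        intro i hi
        simp only [Finset.mem_sdiff, Finset.mem_insert, Finset.mem_singleton, not_or] at hi
        exact hrow i hi.2.1 hi.2.2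
      have hpart2 : 4 ≤ ∑ i ∈ ({l, s} : Finset (Fin (L + 1))), (∑ j : Fin (L + 1), d i j) := by
        rw [Finset.sum_pair hne, ← Finset.sum_add_distrib]
        have hcols : ∑ j : Fin (L + 1), (d l j + d s j)
            = ∑ j ∈ Finset.univ \ ({l, s} : Finset (Fin (L + 1))), (d l j + d s j)
              + ∑ j ∈ ({l, s} : Finset (Fin (L + 1))), (d l j + d s j) :=
          (Finset.sum_sdiff (Finset.subset_univ _)).symm
        have hc1 : 0 ≤ ∑ j ∈ Finset.univ \ ({l, s} : Finset (Fin (L + 1))), (d l j + d s j) := by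
          apply Finset.sum_nonneg
          intro j hj
          simp only [Finset.mem_sdiff, Finset.mem_insert, Finset.mem_singleton, not_or] at hj
          exact hpair j hj.2.1 hj.2.2
        have hc2 : ∑ j ∈ ({l, s} : Finset (Fin (L + 1))), (d l j + d s j) = 4 := by
          rw [Finset.sum_pair hne, hd_ll, hd_sl, hd_ls, hd_ss]
          ring
        rw [hcols, hc2]
        linarith
      linarith
    have hexp : ∑ i : Fin (L + 1), ∑ j : Fin (L + 1), d i j
        = (∑ i : Fin (L + 1), ∑ j : Fin (L + 1), |lam i - lam j|)
          - ∑ i : Fin (L + 1), ∑ j : Fin (L + 1), |lam' i - lam' j| := by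
      simp only [hd, Finset.sum_sub_distrib]
    have hk1 := two_kappa lam
    have hk2 := two_kappa lam'
    linarith
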